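/- Trimming a te-lace of size at least three yields a te-lace. That is, if A is a te-lace with at least 3 rows, r is a row of A, and j is in the support of r, then A//(r,j) is a te-lace. -/

import Mathlib

/-- All the nonzero maximal (m×m) subdeterminants of `A` have the same absolute value. -/
def Equimodular {m n : ℕ} (A : Matrix (Fin m) (Fin n) ℚ) : Prop :=
  ∃ d : ℚ, ∀ g : Fin m ↪ Fin n,
    (A.submatrix id g).det ≠ 0 → |(A.submatrix id g).det| = d

/-- Every set of linearly independent rows of `A` forms an equimodular matrix. -/
def TotallyEquimodular {m n : ℕ} (A : Matrix (Fin m) (Fin n) ℚ) : Prop :=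
  ∀ (k : ℕ) (e : Fin k ↪ Fin m),
    LinearIndependent ℚ (fun i => A (e i)) → Equimodular (A.submatrix e id)

/-- All entries of `A` are `0`, `1` or `-1`. -/
def ZeroPmOne {m n : ℕ} (A : Matrix (Fin m) (Fin n) ℚ) : Prop :=
  ∀ i j, A i j = 0 ∨ A i j = 1 ∨ A i j = -1

/-- A linearly independent set of `0,±1` vectors whose matrix is totally equimodular. -/
def TeSet {m n : ℕ} (A : Matrix (Fin m) (Fin n) ℚ) : Prop :=
  ZeroPmOne A ∧ LinearIndependent ℚ (fun i => A i) ∧ TotallyEquimodular A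

/-- A linearly independent set of `0,±1` vectors whose matrix is totally unimodular. -/
def TuSet {m n : ℕ} (A : Matrix (Fin m) (Fin n) ℚ) : Prop :=
  ZeroPmOne A ∧ LinearIndependent ℚ (fun i => A i) ∧ A.IsTotallyUnimodular

/-- A te-set, not a tu-set, all of whose proper subsets of rows are tu-sets. -/
def TeLace {m n : ℕ} (A : Matrix (Fin m) (Fin n) ℚ) : Prop :=
  TeSet A ∧ ¬ TuSet A ∧
    ∀ (k : ℕ) (e : Fin k ↪ Fin m), k < m → TuSet (A.submatrix e id)

/-- Gaussian pivot of `A` at position `(i, j)`. -/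
def pivotAt {m n : ℕ} (A : Matrix (Fin m) (Fin n) ℚ) (i : Fin m) (j : Fin n) :
    Matrix (Fin m) (Fin n) ℚ :=
  Matrix.of fun r c => if r = i then A i c / A i j else A r c - A r j / A i j * A i c

/-- Trim of `A` at `(i, j)`: pivot at `(i, j)`, then delete row `i` and column `j`. -/
def trimAt {m n : ℕ} (A : Matrix (Fin (m + 1)) (Fin (n + 1)) ℚ)
    (i : Fin (m + 1)) (j : Fin (n + 1)) : Matrix (Fin m) (Fin n) ℚ :=
  (pivotAt A i j).submatrix i.succAbove j.succAbove

/-!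
Let `R`, `C` be the row and column sets of a square submatrix of `A // (i, j)`. Pivoting at `(i, j)`
is a sequence of row operations, so by the Schur complement formula the determinant of that
submatrix is `± det A[R + i, C + j] / A i j`, and here `|A i j| = 1`. Hence square submatrices on
proper row subsets of the trim come from proper row subsets of `A` and are unimodular (in particular
the entries of the trim, which are `2 × 2` minors of `A` on rows `{i, r}`, a proper subset as `A`
has at least three rows), and total equimodularity passes to the trim. Finally, `A` fails to be
totally unimodular only at a maximal minor, all nonzero maximal minors share an absolute value
`d ∉ {0, 1}`, and exchanging column `j` into one of them and trimming it at `(i, j)` gives a square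
submatrix of the trim with determinant `± d`.
-/

open Matrix

section Auxiliary

lemma injective_cons_succAbove {k l : ℕ} (i : Fin (l + 1)) {e : Fin k → Fin l}
    (he : e.Injective) : Function.Injective (Fin.cons i (i.succAbove ∘ e) : Fin (k + 1) → _) :=
  Fin.cons_injective_iff.2 ⟨by simp [Fin.succAbove_ne], Fin.succAbove_right_injective.comp he⟩

lemma mem_range_signTypeCast_of_abs_eq {R : Type*} [Ring R] [LinearOrder R]
    [IsStrictOrderedRing R] {x y : R} (h : |x| = |y|) (hy : y ∈ Set.range SignType.cast) :
    x ∈ Set.range SignType.cast := by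
  obtain ⟨s, rfl⟩ := hy
  cases s
  · exact ⟨0, by simpa [eq_comm] using h⟩
  · rcases abs_eq_abs.mp h with hx | hx
    · exact ⟨-1, by simp [hx]⟩
    · exact ⟨1, by simp [hx]⟩
  · rcases abs_eq_abs.mp h with hx | hx
    · exact ⟨1, by simp [hx]⟩
    · exact ⟨-1, by simp [hx]⟩

lemma injective_of_det_submatrix_ne_zero {R ι κ : Type*} [CommRing R] [Fintype ι] [DecidableEq ι]
    {A : Matrix ι κ R} {g : ι → κ} (h : (A.submatrix id g).det ≠ 0) : g.Injective := by
  intro a b hab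
  by_contra hne
  exact h (det_zero_of_column_eq hne (by simp [hab]))

/-- Steinitz exchange for a nonsingular maximal minor: Cramer's rule writes column `j` in terms of
the columns `g`; any column with a nonzero coefficient can be swapped for `j`. -/
lemma exists_det_submatrix_update_ne_zero {K ι κ : Type*} [Field K] [Fintype ι] [DecidableEq ι]
    {A : Matrix ι κ K} {g : ι → κ} (hg : (A.submatrix id g).det ≠ 0) {j : κ} {r : ι}
    (hr : A r j ≠ 0) : ∃ c, (A.submatrix id (Function.update g c j)).det ≠ 0 := by
  set N := A.submatrix id g
  have hcramer : N.cramer (fun s => A s j) ≠ 0 := by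
    intro h0
    have := congrFun (mulVec_cramer N fun s => A s j) r
    simp [h0, hg, hr] at this
  obtain ⟨c, hc⟩ := Function.ne_iff.1 hcramer
  refine ⟨c, ?_⟩
  have hupdate : A.submatrix id (Function.update g c j) = N.updateCol c (fun s => A s j) := by
    ext s t
    by_cases ht : t = c <;> simp [N, ht]
  rwa [hupdate, ← cramer_apply]

variable {m n : ℕ} {A : Matrix (Fin m) (Fin n) ℚ}

lemma Matrix.IsTotallyUnimodular.zeroPmOne (hA : A.IsTotallyUnimodular) : ZeroPmOne A :=
  fun r c => by simpa [SignType.range_eq, or_comm, or_left_comm] using hA.apply r c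

lemma ZeroPmOne.abs_eq_one (hA : ZeroPmOne A) {i : Fin m} {j : Fin n} (h : A i j ≠ 0) :
    |A i j| = 1 := by
  rcases hA i j with h0 | h1 | h1 <;> simp_all

lemma TeLace.exists_det_submatrix_notMem_range (hA : TeLace A) :
    ∃ g : Fin m → Fin n, g.Injective ∧ (A.submatrix id g).det ∉ Set.range SignType.cast := by
  obtain ⟨⟨hZ, hLI, -⟩, hnotTU, hproper⟩ := hA
  have hA : ¬ A.IsTotallyUnimodular := fun h => hnotTU ⟨hZ, hLI, h⟩
  simp only [IsTotallyUnimodular, not_forall] at hA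
  obtain ⟨k, f, g, hf, hg, hfg⟩ := hA
  have hkm : k ≤ m := by simpa using Fintype.card_le_of_injective f hf
  obtain hk | rfl := hkm.lt_or_eq
  · refine absurd ?_ hfg
    simpa [submatrix_submatrix] using
      (hproper k ⟨f, hf⟩ hk).2.2 k id g Function.injective_id hg
  · set σ := Equiv.ofBijective f (Finite.injective_iff_bijective.1 hf)
    refine ⟨g ∘ σ.symm, hg.comp σ.symm.injective, ?_⟩
    have hσ : A.submatrix f g = (A.submatrix id (g ∘ σ.symm)).submatrix σ σ := by
      ext r c
      simp [σ]
    rwa [hσ, det_submatrix_equiv_self] at hfg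

end Auxiliary

/-- Subtracting multiples of row `i` clears column `j` outside row `i`; the Laplace expansion along
column `j` then has a single term. -/
lemma det_eq_mul_det_trimAt {k : ℕ} (M : Matrix (Fin (k + 1)) (Fin (k + 1)) ℚ) (i j : Fin (k + 1))
    (h : M i j ≠ 0) : M.det = (-1) ^ (i + j : ℕ) * M i j * (trimAt M i j).det := by
  set M' := (pivotAt M i j).updateRow i (M i)
  have hM' : M'.det = M.det := by
    refine det_eq_of_forall_row_eq_smul_add_const (fun r => if r = i then 0 else -(M r j / M i j))
      i (by simp) fun r c => ?_
    by_cases hr : r = i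
    · subst hr; simp [M']
    · simp only [M', updateRow_ne hr, pivotAt, of_apply, if_neg hr]
      ring
  have hcol : ∀ r ≠ i, M' r j = 0 := fun r hr => by
    simp only [M', updateRow_ne hr, pivotAt, of_apply, if_neg hr, div_mul_cancel₀ _ h, sub_self]
  have htrim : M'.submatrix i.succAbove j.succAbove = trimAt M i j := by
    ext r c; simp [M', trimAt, Fin.succAbove_ne]
  rw [← hM', det_succ_column M' j, Finset.sum_eq_single i (fun r _ hr => by simp [hcol r hr])
    (by simp), htrim]
  simp [M']

section Trim

variable {m n : ℕ}

lemma trimAt_apply (A : Matrix (Fin (m + 1)) (Fin (n + 1)) ℚ) (i : Fin (m + 1)) (j : Fin (n + 1))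
    (r : Fin m) (c : Fin n) :
    trimAt A i j r c =
      A (i.succAbove r) (j.succAbove c) - A (i.succAbove r) j / A i j * A i (j.succAbove c) := by
  simp [trimAt, pivotAt, Fin.succAbove_ne]

lemma trimAt_submatrix (A : Matrix (Fin (m + 1)) (Fin (n + 1)) ℚ) {k l : ℕ}
    {f : Fin (k + 1) → Fin (m + 1)} {g : Fin (l + 1) → Fin (n + 1)} {i : Fin (k + 1)}
    {j : Fin (l + 1)} {e : Fin k → Fin m} {h : Fin l → Fin n}
    (hf : ∀ r, f (i.succAbove r) = (f i).succAbove (e r))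
    (hg : ∀ c, g (j.succAbove c) = (g j).succAbove (h c)) :
    trimAt (A.submatrix f g) i j = (trimAt A (f i) (g j)).submatrix e h := by
  ext r c
  simp only [trimAt_apply, submatrix_apply, hf, hg]

lemma submatrix_trimAt (A : Matrix (Fin (m + 1)) (Fin (n + 1)) ℚ) (i : Fin (m + 1))
    (j : Fin (n + 1)) {k l : ℕ} (e : Fin k → Fin m) (g : Fin l → Fin n) :
    (trimAt A i j).submatrix e g =
      trimAt (A.submatrix (Fin.cons i (i.succAbove ∘ e)) (Fin.cons j (j.succAbove ∘ g))) 0 0 :=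
  (trimAt_submatrix A (f := Fin.cons i (i.succAbove ∘ e)) (g := Fin.cons j (j.succAbove ∘ g))
    (i := 0) (j := 0) (fun _ => rfl) (fun _ => rfl)).symm

variable {A : Matrix (Fin (m + 1)) (Fin (n + 1)) ℚ} {i : Fin (m + 1)} {j : Fin (n + 1)}

lemma det_submatrix_cons_succAbove (h : A i j ≠ 0) {k : ℕ} (e : Fin k → Fin m)
    (g : Fin k → Fin n) :
    (A.submatrix (Fin.cons i (i.succAbove ∘ e)) (Fin.cons j (j.succAbove ∘ g))).det =
      A i j * ((trimAt A i j).submatrix e g).det := by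
  rw [det_eq_mul_det_trimAt _ 0 0 h, submatrix_trimAt]
  simp

lemma abs_det_submatrix_trimAt (h : |A i j| = 1) {k : ℕ} (e : Fin k → Fin m) (g : Fin k → Fin n) :
    |((trimAt A i j).submatrix e g).det| =
      |(A.submatrix (Fin.cons i (i.succAbove ∘ e)) (Fin.cons j (j.succAbove ∘ g))).det| := by
  rw [det_submatrix_cons_succAbove (by rintro h0; simp [h0] at h), abs_mul, h, one_mul]

theorem Matrix.IsTotallyUnimodular.trimAt (hA : A.IsTotallyUnimodular) (h : A i j ≠ 0) :
    (trimAt A i j).IsTotallyUnimodular := by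
  have h1 : |A i j| = 1 := hA.zeroPmOne.abs_eq_one h
  intro k e g _ _
  exact mem_range_signTypeCast_of_abs_eq (abs_det_submatrix_trimAt h1 e g)
    ((isTotallyUnimodular_iff A).1 hA _ _ _)

theorem TotallyEquimodular.trimAt (hLI : LinearIndependent ℚ (fun r => A r))
    (hTE : TotallyEquimodular A) (h : |A i j| = 1) : TotallyEquimodular (trimAt A i j) := by
  intro k e _
  obtain ⟨d, hd⟩ := hTE (k + 1) ⟨_, injective_cons_succAbove i e.injective⟩
    (hLI.comp _ (injective_cons_succAbove i e.injective))
  refine ⟨d, fun g hg => ?_⟩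
  have hdg := hd ⟨_, injective_cons_succAbove j g.injective⟩
  simp only [submatrix_submatrix, Function.comp_id, Function.id_comp,
    Function.Embedding.coeFn_mk] at hg hdg ⊢
  rw [← abs_ne_zero, abs_det_submatrix_trimAt h, abs_ne_zero] at hg
  rw [abs_det_submatrix_trimAt h]
  exact hdg hg

/-- A dependency among the rows of the trim lifts to one among the rows of `A`, with row `i` absorbing
the multiples of it that the pivot subtracted. -/
theorem LinearIndependent.trimAt (hLI : LinearIndependent ℚ (fun r => A r)) (h : A i j ≠ 0) :
    LinearIndependent ℚ (fun r => trimAt A i j r) := by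
  rw [Fintype.linearIndependent_iff] at hLI ⊢
  intro c hc
  set t := ∑ r, c r * A (i.succAbove r) j / A i j
  have hzero : ∑ x, (Fin.insertNth i (-t) c : Fin (m + 1) → ℚ) x • A x = 0 := by
    ext col
    rw [Fin.sum_univ_succAbove _ i]
    simp only [Fin.insertNth_apply_same, Fin.insertNth_apply_succAbove, Pi.add_apply,
      Finset.sum_apply, Pi.smul_apply, smul_eq_mul, Pi.zero_apply]
    induction col using Fin.succAboveCases j with
    | x =>
      simp only [t, Finset.sum_mul, ← Finset.sum_neg_distrib, ← Finset.sum_add_distrib]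
      refine Finset.sum_eq_zero fun r _ => ?_
      field_simp
      ring
    | p b =>
      have hb := congrFun hc b
      simp only [Finset.sum_apply, Pi.smul_apply, smul_eq_mul, trimAt_apply, Pi.zero_apply] at hb
      rw [← hb]
      simp only [t, Finset.sum_mul, ← Finset.sum_neg_distrib, ← Finset.sum_add_distrib]
      refine Finset.sum_congr rfl fun r _ => ?_
      ring
  intro r
  simpa using hLI _ hzero (i.succAbove r)

theorem TeLace.isTotallyUnimodular_submatrix_trimAt (hA : TeLace A) (h : A i j ≠ 0) {k : ℕ}
    (e : Fin k ↪ Fin m) (hk : k < m) : ((trimAt A i j).submatrix e id).IsTotallyUnimodular := by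
  rw [submatrix_trimAt]
  refine IsTotallyUnimodular.trimAt ?_ (by simpa using h)
  exact (hA.2.2 (k + 1) ⟨_, injective_cons_succAbove i e.injective⟩ (by omega)).2.2.submatrix id _

theorem TeLace.not_isTotallyUnimodular_trimAt (hA : TeLace A) (h : |A i j| = 1) :
    ¬ (trimAt A i j).IsTotallyUnimodular := by
  have hij : A i j ≠ 0 := by rintro h0; simp [h0] at h
  obtain ⟨g, hg, hbad⟩ := hA.exists_det_submatrix_notMem_range
  have hg0 : (A.submatrix id g).det ≠ 0 := fun h0 => hbad ⟨0, by simp [h0]⟩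
  obtain ⟨c, hc⟩ := exists_det_submatrix_update_ne_zero hg0 hij
  set G := Function.update g c j
  have hG := injective_of_det_submatrix_ne_zero hc
  have hGc : G c = j := Function.update_self c j g
  obtain ⟨d, hd⟩ := hA.1.2.2 (m + 1) (Function.Embedding.refl _) hA.1.2.1
  have habs : |(A.submatrix id G).det| = |(A.submatrix id g).det| :=
    (hd ⟨G, hG⟩ hc).trans (hd ⟨g, hg⟩ hg0).symm
  have hcols : ∀ a, ∃ b, G (c.succAbove a) = j.succAbove b := fun a =>
    (Fin.exists_succAbove_eq (hGc ▸ hG.ne (Fin.succAbove_ne c a))).imp fun _ => Eq.symm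
  choose h' hh' using hcols
  have htrim : trimAt (A.submatrix id G) i c = (trimAt A i j).submatrix id h' := by
    rw [trimAt_submatrix A (f := id) (fun _ => rfl) (hGc ▸ hh'), hGc]; rfl
  intro hTU
  refine hbad (mem_range_signTypeCast_of_abs_eq ?_ ((isTotallyUnimodular_iff _).1 hTU m id h'))
  rw [← habs, det_eq_mul_det_trimAt _ i c (by simpa [hGc]), htrim]
  simp [abs_mul, hGc, h]

end Trim

theorem stmt6 {m n : ℕ} (A : Matrix (Fin (m + 1)) (Fin (n + 1)) ℚ)
    (hA : TeLace A) (hsize : 3 ≤ m + 1) (i : Fin (m + 1)) (j : Fin (n + 1))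
    (hij : A i j ≠ 0) : TeLace (trimAt A i j) := by
  obtain ⟨⟨hZ, hLI, hTE⟩, -⟩ := id hA
  have h1 : |A i j| = 1 := hZ.abs_eq_one hij
  have hproper : ∀ (k : ℕ) (e : Fin k ↪ Fin m), k < m →
      ((trimAt A i j).submatrix e id).IsTotallyUnimodular := fun k e hk =>
    hA.isTotallyUnimodular_submatrix_trimAt hij e hk
  have hZ' : ZeroPmOne (trimAt A i j) := fun r c =>
    (hproper 1 ⟨fun _ => r, fun _ _ _ => Subsingleton.elim _ _⟩ (by omega)).zeroPmOne 0 c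
  have hLI' := hLI.trimAt hij
  exact ⟨⟨hZ', hLI', hTE.trimAt hLI h1⟩, fun hTU => hA.not_isTotallyUnimodular_trimAt h1 hTU.2.2,
    fun k e hk => ⟨fun r c => hZ' (e r) c, hLI'.comp _ e.injective, hproper k e hk⟩⟩
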